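/- arXiv:2510.21498 — 5 statements merged into one kernel-verified Lean document; each statement's English description precedes it below -/
import Mathlib

section
/- Let S be a compact Hausdorff space and 𝒟 ⊆ K(S). Define ∼𝒟 = {C̃ ∈ K(S) : C̃ ∩ C ≠ ∅ for all C ∈ 𝒟}. Then 𝒟 is involutive (𝒟 = ∼∼𝒟) if and only if for every compact C: C ∈ 𝒟 ⟺ every compact neighborhood C' of C is in 𝒟. -/
open Set

/-- The compact subsets of `S`. -/
def Kpt (S : Type*) [TopologicalSpace S] := {C : Set S // IsCompact C}

/-- `∼𝒟 = {C̃ ∈ K(S) : C̃ ∩ C ≠ ∅ for every C ∈ 𝒟}`. -/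
def tilde {S : Type*} [TopologicalSpace S] (D : Set (Kpt S)) : Set (Kpt S) :=
  {Ct | ∀ C ∈ D, (Ct.1 ∩ C.1).Nonempty}

/-- `C'` is a compact neighborhood of `C`: it contains an open set containing `C`. -/
def IsCpctNbhd {S : Type*} [TopologicalSpace S] (C C' : Kpt S) : Prop :=
  ∃ O : Set S, IsOpen O ∧ C.1 ⊆ O ∧ O ⊆ C'.1

/-!
The inclusion `𝒟 ⊆ ∼∼𝒟` always holds, and every family `∼ℰ` is upward closed and
satisfies the neighborhood condition: if `C` misses some `X ∈ ℰ`, then by normality of compact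
Hausdorff spaces the closure of a separating open set around `C` is a compact neighborhood
that still misses `X`. Conversely, if `𝒟` satisfies the neighborhood condition and `C ∈ ∼∼𝒟`,
let `C'` be a compact neighborhood of `C` with `C ⊆ O ⊆ C'`, `O` open. If `C' ∉ 𝒟`, then the
compact set `Oᶜ` lies in `∼𝒟`: any `X ∈ 𝒟` missing `Oᶜ` has `C'` as a neighborhood, forcing
`C' ∈ 𝒟`. Hence `C` meets `Oᶜ`, which is absurd; so every such `C'` is in `𝒟`, and so is `C`.
-/

section

variable {S : Type*} [TopologicalSpace S]

theorem subset_tilde_tilde (D : Set (Kpt S)) : D ⊆ tilde (tilde D) :=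
  fun C hC _ hX => (hX C hC).mono (inter_comm _ _).subset

theorem mem_tilde_of_subset {E : Set (Kpt S)} {C C' : Kpt S} (hC : C ∈ tilde E)
    (hCC' : C.1 ⊆ C'.1) : C' ∈ tilde E :=
  fun X hX => (hC X hX).mono (inter_subset_inter_left _ hCC')

theorem IsCpctNbhd.subset {C C' : Kpt S} (h : IsCpctNbhd C C') : C.1 ⊆ C'.1 :=
  let ⟨_, _, hCO, hOC'⟩ := h
  hCO.trans hOC'

theorem exists_isCpctNbhd_disjoint [CompactSpace S] [T2Space S] {C X : Kpt S}
    (h : Disjoint C.1 X.1) : ∃ C' : Kpt S, IsCpctNbhd C C' ∧ Disjoint C'.1 X.1 := by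
  obtain ⟨U, V, hU, hV, hCU, hXV, hUV⟩ := SeparatedNhds.of_isCompact_isCompact C.2 X.2 h
  exact ⟨⟨closure U, isClosed_closure.isCompact⟩, ⟨U, hU, hCU, subset_closure⟩,
    (hUV.closure_left hV).mono_right hXV⟩

theorem mem_tilde_iff_forall_isCpctNbhd [CompactSpace S] [T2Space S] {E : Set (Kpt S)}
    (C : Kpt S) : C ∈ tilde E ↔ ∀ C' : Kpt S, IsCpctNbhd C C' → C' ∈ tilde E := by
  refine ⟨fun hC C' hCC' => mem_tilde_of_subset hC hCC'.subset, fun hC X hX => ?_⟩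
  refine not_disjoint_iff_nonempty_inter.mp fun hCX => ?_
  obtain ⟨C', hCC', hC'X⟩ := exists_isCpctNbhd_disjoint hCX
  exact not_disjoint_iff_nonempty_inter.mpr (hC C' hCC' X hX) hC'X

theorem tilde_tilde_subset_of_forall_isCpctNbhd [CompactSpace S] {D : Set (Kpt S)}
    (hD : ∀ C : Kpt S, C ∈ D ↔ ∀ C' : Kpt S, IsCpctNbhd C C' → C' ∈ D) :
    tilde (tilde D) ⊆ D := by
  intro C hC
  refine (hD C).mpr fun C' ⟨O, hO, hCO, hOC'⟩ => ?_
  by_contra hC'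
  have hOc : (⟨Oᶜ, hO.isClosed_compl.isCompact⟩ : Kpt S) ∈ tilde D := by
    refine fun X hX => not_disjoint_iff_nonempty_inter.mp fun hOX => hC' ?_
    exact (hD X).mp hX C' ⟨O, hO, disjoint_compl_left_iff_subset.mp hOX, hOC'⟩
  obtain ⟨x, hxC, hxO⟩ := hC _ hOc
  exact hxO (hCO hxC)

end

theorem stmt4 {S : Type*} [TopologicalSpace S] [CompactSpace S] [T2Space S]
    (D : Set (Kpt S)) :
    D = tilde (tilde D) ↔ ∀ C : Kpt S, (C ∈ D ↔ ∀ C' : Kpt S, IsCpctNbhd C C' → C' ∈ D) := by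
  refine ⟨fun hD C => ?_, fun hD => ?_⟩
  · rw [hD]
    exact mem_tilde_iff_forall_isCpctNbhd C
  · exact (subset_tilde_tilde D).antisymm (tilde_tilde_subset_of_forall_isCpctNbhd hD)
end

section
/- Let S be a compact metric space, X and Z sets, and τ : X × Z → S. Suppose there exist disjoint compact sets C, C̃ ⊆ S and sequences (a_i)_{i<ω} in X, (b_i)_{i<ω} in Z such that τ(a_j, b_i) ∈ C and τ(a_i, b_j) ∈ C̃ for all i < j. Then there exist subsequences (a'_i), (b'_i) such that both iterated limits lim_{i→∞} lim_{j→∞} τ(a'_i, b'_j) and lim_{j→∞} lim_{i→∞} τ(a'_i, b'_j) exist and are distinct. -/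
/-! Extract a subsequence along which every row and every column of the array
`τ (a i, b j)` converges, and then one along which the row limits and the column limits
converge as well; this is possible because `ℕ → S` is sequentially compact. Each row limit is
a limit of entries above the diagonal, so it lies in `C̃`, and each column limit lies in `C`;
the two iterated limits therefore lie in the disjoint closed sets `C̃` and `C`. -/

open Set Filter Topology

section IteratedLimits

variable {S : Type*} [TopologicalSpace S] [CompactSpace S] [FirstCountableTopology S]

theorem exists_strictMono_tendsto_rows (f : ℕ → ℕ → S) :
    ∃ φ : ℕ → ℕ, StrictMono φ ∧ ∃ u : ℕ → S,
      ∀ i, Tendsto (fun j => f i (φ j)) atTop (𝓝 (u i)) := by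
  obtain ⟨u, φ, hφ, hu⟩ := CompactSpace.tendsto_subseq fun j i => f i j
  exact ⟨φ, hφ, u, tendsto_pi_nhds.mp hu⟩

theorem exists_strictMono_iterated_limits (f : ℕ → ℕ → S) :
    ∃ g : ℕ → ℕ, StrictMono g ∧ ∃ (u v : ℕ → S) (L₁ L₂ : S),
      (∀ i, Tendsto (fun j => f (g i) (g j)) atTop (𝓝 (u i))) ∧
      Tendsto u atTop (𝓝 L₁) ∧
      (∀ j, Tendsto (fun i => f (g i) (g j)) atTop (𝓝 (v j))) ∧
      Tendsto v atTop (𝓝 L₂) := by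
  obtain ⟨ψ, hψ, u, hu⟩ := exists_strictMono_tendsto_rows f
  obtain ⟨φ, hφ, v, hv⟩ := exists_strictMono_tendsto_rows fun j i => f (ψ i) (ψ j)
  obtain ⟨L₁, χ₁, hχ₁, hL₁⟩ := CompactSpace.tendsto_subseq fun n => u (ψ (φ n))
  obtain ⟨L₂, χ₂, hχ₂, hL₂⟩ := CompactSpace.tendsto_subseq fun n => v (φ (χ₁ n))
  have hθ : StrictMono (φ ∘ χ₁ ∘ χ₂) := hφ.comp (hχ₁.comp hχ₂)
  refine ⟨ψ ∘ φ ∘ χ₁ ∘ χ₂, hψ.comp hθ, fun i => u (ψ (φ (χ₁ (χ₂ i)))),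
    fun j => v (φ (χ₁ (χ₂ j))), L₁, L₂, fun i => ?_, hL₁.comp hχ₂.tendsto_atTop,
    fun j => ?_, hL₂⟩
  · exact (hu _).comp hθ.tendsto_atTop
  · exact (hv _).comp (hχ₁.comp hχ₂).tendsto_atTop

end IteratedLimits

theorem IsClosed.mem_of_tendsto_of_tendsto_rows {S : Type*} [TopologicalSpace S] {C : Set S}
    (hC : IsClosed C) {f : ℕ → ℕ → S} (hf : ∀ i j, i < j → f i j ∈ C) {u : ℕ → S} {L : S}
    (hu : ∀ i, Tendsto (f i) atTop (𝓝 (u i))) (hL : Tendsto u atTop (𝓝 L)) : L ∈ C := by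
  have hrow : ∀ i, u i ∈ C := fun i =>
    hC.mem_of_tendsto (hu i) ((eventually_gt_atTop i).mono (hf i))
  exact hC.mem_of_tendsto hL (Eventually.of_forall hrow)

theorem stmt8 {S X Z : Type*} [MetricSpace S] [CompactSpace S]
    (τ : X × Z → S) (C Ct : Set S) (hC : IsCompact C) (hCt : IsCompact Ct)
    (hdisj : C ∩ Ct = ∅) (a : ℕ → X) (b : ℕ → Z)
    (h : ∀ i j : ℕ, i < j → τ (a j, b i) ∈ C ∧ τ (a i, b j) ∈ Ct) :
    ∃ g : ℕ → ℕ, StrictMono g ∧ ∃ (u v : ℕ → S) (L1 L2 : S),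
      (∀ i, Tendsto (fun j => τ (a (g i), b (g j))) atTop (𝓝 (u i))) ∧
      Tendsto u atTop (𝓝 L1) ∧
      (∀ j, Tendsto (fun i => τ (a (g i), b (g j))) atTop (𝓝 (v j))) ∧
      Tendsto v atTop (𝓝 L2) ∧ L1 ≠ L2 := by
  obtain ⟨g, hg, u, v, L1, L2, hu, hL1, hv, hL2⟩ :=
    exists_strictMono_iterated_limits fun i j => τ (a i, b j)
  refine ⟨g, hg, u, v, L1, L2, hu, hL1, hv, hL2, ?_⟩
  have hL1Ct : L1 ∈ Ct := hCt.isClosed.mem_of_tendsto_of_tendsto_rows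
    (fun i j hij => (h _ _ (hg hij)).2) hu hL1
  have hL2C : L2 ∈ C := hC.isClosed.mem_of_tendsto_of_tendsto_rows
    (f := fun j i => τ (a (g i), b (g j))) (fun j i hji => (h _ _ (hg hji)).1) hv hL2
  rintro rfl
  exact (Set.eq_empty_iff_forall_notMem.mp hdisj) L1 ⟨hL2C, hL1Ct⟩
end

section
/- Let X, Z be sets, and m < ω. Suppose R ⊆ X × Z is a relation such that there is no sequence (a_i; b_i : i < m) in X × Z with R(a_n, b_i) ∧ ¬R(a_i, b_n) for all i < n < m (finitary stability with bound m). Let D ⊆ Z be approximable by R: for every finite B ⊆ Z there is a ∈ X with (b ∈ D ⟺ R(a,b)) for all b ∈ B. Then there exist k, m' < ω and elements (a_{i,j} : i < k, j < m') in X such that for all b ∈ Z: b ∈ D ⟺ ⋁_{i<k} ⋀_{j<m'} R(a_{i,j}, b). -/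
/-!
Stability yields, for every finite `B ⊆ Z`, fibres `R(a_j, ·)`, `j < m`, all containing `B ∩ D`
and with intersection inside `D`: greedily pick `a_n` approximating `D` on `B` and on the
witnesses `b_i ∉ D` chosen so far; if the intersection so far is not inside `D`, pick a new
witness `b_n ∉ D` in it. This builds a half-graph, which cannot reach length `m`.

If finitely many of these intersections never cover `D`, alternately choosing a point of `D`
outside the previous intersections and a finite set containing the chosen points gives an
infinite sequence in which every later intersection contains every earlier point while every
earlier intersection misses every later point in one of its `m` fibres. Ramsey's theorem makes
that fibre index constant along a subsequence, and this is a half-graph of length `m`.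
-/

open Filter

theorem Nat.exists_strictMono_monochromatic_pairs {κ : Type*} [Finite κ] {P : ℕ → ℕ → κ → Prop}
    (hP : ∀ i j, i < j → ∃ c, P i j c) :
    ∃ (g : ℕ → ℕ) (c : κ), StrictMono g ∧ ∀ i j, i < j → P (g i) (g j) c := by
  -- give `i` the colour of a `U`-large set of its pairs `(i, j)`, then fix a `U`-large colour
  let U : Ultrafilter ℕ := hyperfilter ℕ
  have hU : ∀ i, ∀ᶠ j in (U : Filter ℕ), i < j := fun i =>
    Nat.hyperfilter_le_atTop (eventually_gt_atTop i)
  choose d hd using fun i => Ultrafilter.eventually_exists_iff.1 ((hU i).mono (hP i))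
  obtain ⟨c, hc⟩ : ∃ c, ∀ᶠ i in (U : Filter ℕ), d i = c :=
    Ultrafilter.eventually_exists_iff.1 (.of_forall fun i => ⟨d i, rfl⟩)
  obtain ⟨g, -, hg⟩ := exists_seq_of_forall_finset_exists (fun i => d i = c)
    (fun i j => i < j ∧ P i j c) fun t ht =>
      (hc.and (t.eventually_all.2 fun i hi => (hU i).and (ht i hi ▸ hd i))).exists
  exact ⟨g, c, fun i j hij => (hg i j hij).1, fun i j hij => (hg i j hij).2⟩

theorem List.exists_mem_iff_exists_lt_getD {α : Type*} (l : List α) (d : α) {p : α → Prop} :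
    (∃ x ∈ l, p x) ↔ ∃ i < l.length, p (l.getD i d) := by
  rw [List.exists_mem_iff_getElem]
  exact exists_congr fun i => ⟨fun ⟨hi, h⟩ => ⟨hi, by rwa [List.getD_eq_getElem _ _ hi]⟩,
    fun ⟨hi, h⟩ => ⟨hi, by rwa [List.getD_eq_getElem _ _ hi] at h⟩⟩

section Stability

variable {X Z : Type*} {R : X → Z → Prop} {m : ℕ}

def HasHalfGraph (R : X → Z → Prop) (m : ℕ) : Prop :=
  ∃ (a : ℕ → X) (b : ℕ → Z), ∀ i n, i < n → n < m → R (a n) (b i) ∧ ¬ R (a i) (b n)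

theorem hasHalfGraph_of_reversed {a : ℕ → X} {b : ℕ → Z}
    (h : ∀ i j, i < j → j < m → R (a i) (b j) ∧ ¬ R (a j) (b i)) : HasHalfGraph R m :=
  ⟨fun t => a (m - 1 - t), fun t => b (m - 1 - t), fun _ _ hin hnm => h _ _ (by omega) (by omega)⟩

variable {D : Set Z}

theorem exists_cover_of_not_hasHalfGraph (hR : ¬ HasHalfGraph R m)
    (happrox : ∀ B : Finset Z, ∃ a, ∀ b ∈ B, (b ∈ D ↔ R a b)) (B : Finset Z) :
    ∃ a : ℕ → X, (∀ j, ∀ b ∈ B, b ∈ D → R (a j) b) ∧ {z | ∀ j < m, R (a j) z} ⊆ D := by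
  classical
  by_contra! hB
  have escape (a : ℕ → X) (ha : ∀ j, ∀ b ∈ B, b ∈ D → R (a j) b) :
      ∃ c ∉ D, ∀ j < m, R (a j) c := by
    obtain ⟨c, hc, hcD⟩ := Set.not_subset.1 (hB a ha)
    exact ⟨c, hcD, hc⟩
  suffices ∀ n ≤ m, ∃ (a : ℕ → X) (b : ℕ → Z), (∀ i < n, b i ∉ D ∧ ∀ x ∈ B, x ∈ D → R (a i) x) ∧
      ∀ i j, i < j → j < n → R (a i) (b j) ∧ ¬ R (a j) (b i) by
    obtain ⟨a, b, -, hab⟩ := this m le_rfl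
    exact hR (hasHalfGraph_of_reversed hab)
  intro n hn
  induction n with
  | zero =>
    obtain ⟨x, hx⟩ := happrox B
    obtain ⟨c, -⟩ := escape (fun _ => x) fun _ b hb => (hx b hb).1
    exact ⟨fun _ => x, fun _ => c, by simp, by simp⟩
  | succ n ih =>
    obtain ⟨a, b, hbD, hab⟩ := ih (by omega)
    obtain ⟨x, hx⟩ := happrox (B ∪ (Finset.range n).image b)
    obtain ⟨c, hcD, hc⟩ := escape (fun j => if j < n then a j else x) fun j y hy hyD => by
      split_ifs with hj
      · exact (hbD j hj).2 y hy hyD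
      · exact (hx y (by simp [hy])).1 hyD
    refine ⟨fun j => if j < n then a j else x, fun j => if j < n then b j else c, ?_, ?_⟩
    · intro i hi
      by_cases hin : i < n
      · simpa [hin] using hbD i hin
      · simp only [hin, if_false]
        exact ⟨hcD, fun y hy hyD => (hx y (by simp [hy])).1 hyD⟩
    · intro i j hij hj
      have hin : i < n := by omega
      by_cases hjn : j < n
      · simpa [hin, hjn] using hab i j hij hjn
      · have hbx : b i ∈ B ∪ (Finset.range n).image b :=
          Finset.mem_union_right _ (Finset.mem_image_of_mem b (Finset.mem_range.2 hin))
        have hac : R (a i) c := by simpa [hin] using hc i (by omega)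
        simpa [hin, hjn] using ⟨hac, fun hR => (hbD i hin).1 ((hx _ hbx).2 hR)⟩

theorem hasHalfGraph_of_forall_finset_escape (F : Finset Z → ℕ → X)
    (hF : ∀ B j, ∀ b ∈ B, b ∈ D → R (F B j) b)
    (hesc : ∀ T : Finset (Finset Z), ∃ z ∈ D, ∀ s ∈ T, ∃ j < m, ¬ R (F s j) z) :
    HasHalfGraph R m := by
  classical
  obtain ⟨f, hfD, hf⟩ := exists_seq_of_forall_finset_exists
    (fun p : Z × Finset Z => p.1 ∈ p.2 ∧ ↑p.2 ⊆ D)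
    (fun p q => p.2 ⊆ q.2 ∧ ∃ j < m, ¬ R (F p.2 j) q.1) fun t ht => by
      obtain ⟨z, hzD, hz⟩ := hesc (t.image Prod.snd)
      refine ⟨(z, insert z (t.sup Prod.snd)), ⟨Finset.mem_insert_self _ _, ?_⟩,
        fun p hp => ⟨(Finset.le_sup hp).trans (Finset.subset_insert _ _),
          hz _ (Finset.mem_image_of_mem _ hp)⟩⟩
      intro x hx
      rcases Finset.mem_insert.1 hx with rfl | hx
      · exact hzD
      · obtain ⟨p, hp, hxp⟩ := Finset.mem_sup.1 hx
        exact (ht p hp).2 hxp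
  obtain ⟨g, c, hg, hgc⟩ := Nat.exists_strictMono_monochromatic_pairs (κ := Fin m)
    (P := fun i j c => ¬ R (F (f i).2 c) (f j).1) fun i j hij => by
      obtain ⟨c, hc, h⟩ := (hf i j hij).2
      exact ⟨⟨c, hc⟩, h⟩
  refine ⟨fun t => F (f (g t)).2 c, fun t => (f (g t)).1, fun i n hin _ => ⟨?_, hgc i n hin⟩⟩
  exact hF _ _ _ ((hf _ _ (hg hin)).1 (hfD _).1) ((hfD _).2 (hfD _).1)

end Stability

theorem stmt12 {X Z : Type*} (R : X → Z → Prop) (m : ℕ)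
    (hstable : ¬ ∃ (a : ℕ → X) (b : ℕ → Z),
      ∀ i n : ℕ, i < n → n < m → R (a n) (b i) ∧ ¬ R (a i) (b n))
    (D : Set Z)
    (happrox : ∀ B : Finset Z, ∃ a : X, ∀ b ∈ B, (b ∈ D ↔ R a b)) :
    ∃ (k m' : ℕ) (A : ℕ → ℕ → X),
      ∀ b : Z, b ∈ D ↔ ∃ i < k, ∀ j < m', R (A i j) b := by
  choose F hFB hFD using exists_cover_of_not_hasHalfGraph hstable happrox
  by_cases hT : ∃ T : List (Finset Z), ∀ z ∈ D, ∃ s ∈ T, ∀ j < m, R (F s j) z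
  · obtain ⟨T, hT⟩ := hT
    refine ⟨T.length, m, fun i => F (T.getD i ∅), fun b => ⟨fun hb => ?_, ?_⟩⟩
    · exact (T.exists_mem_iff_exists_lt_getD ∅).1 (hT b hb)
    · rintro ⟨i, -, hi⟩
      exact hFD _ hi
  · push Not at hT
    refine absurd (hasHalfGraph_of_forall_finset_escape F hFB fun T => ?_) hstable
    simpa using hT T.toList
end

section
/- Let X, Z be sets, S a compact Hausdorff space, and φ : X × Z × K(S) → Prop together with a dual ∼φ : X × Z × K(S) → Prop satisfying: φ(a,b,C) and ∼φ(a,b,C̃) imply C ∩ C̃ ≠ ∅; and φ monotone and ∼φ monotone in the compact-set argument. Fix a compact symmetric neighborhood ε of the diagonal, and suppose there is a maximal m such that a sequence (a_i;b_i;C_i;C̃_i : i < m) exists with φ(a_n,b_i,C_i) ∧ ∼φ(a_i,b_n,C̃_n) and C_i^ε ∩ C̃_i = ∅ for all i < n < m (ε-stability with maximal witness length m). Define σ((a_0,…,a_{m-1}), b, C) := ⋀_{i<m} φ(a_i,b,C) and ∼σ((a_0,…,a_{m-1}), b, C̃) := ⋁_{i<m} ∼φ(a_i,b,C̃). Then σ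 is ε-stable: there is a bound k such that no sequence of length k witnesses the ε-order property for σ. -/
/-! A witness of length `k` for the `ε`-order property of `σ` colours every pair `i < n < k`
by an index `t < m` with `∼φ(a_i^t, b_n, C̃_n)`. A Ramsey-type argument extracts a chain
`x_0 < ⋯ < x_m` on which this colour depends only on the smaller index, say it is `t_i`.
Then `(a_{x_n}^{t_n}; b_{x_n}; C_{x_n}; C̃_{x_n} : n ≤ m)` witnesses the `ε`-order property of
`φ` of length `m + 1`, contradicting the maximality of `m`. -/

open Set

/-- The `ε`-fattening `C^ε = {α ∈ S : (ξ, α) ∈ ε for some ξ ∈ C}`. -/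
def fat {S : Type*} (ε : Set (S × S)) (C : Set S) : Set S :=
  {α | ∃ ξ ∈ C, (ξ, α) ∈ ε}

/-- The `ε`-order property of length `m` for a pair `(φ, ∼φ)`. -/
def epsOP {S X Z : Type*} (ε : Set (S × S))
    (φ ψ : X → Z → Set S → Prop) (m : ℕ) : Prop :=
  ∃ (a : ℕ → X) (b : ℕ → Z) (Cs Ct : ℕ → Set S),
    ∀ i n : ℕ, i < n → n < m →
      φ (a n) (b i) (Cs i) ∧ ψ (a i) (b n) (Ct n) ∧ fat ε (Cs i) ∩ Ct i = ∅

open scoped Finset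

def prehomogeneousBound (m : ℕ) : ℕ → ℕ
  | 0 => 1
  | j + 1 => m * prehomogeneousBound m j + 1

theorem exists_prehomogeneous_chain {α : Type*} [Fintype α] [Nonempty α] (c : ℕ → ℕ → α)
    (j : ℕ) (A : Finset ℕ) (hA : prehomogeneousBound (Fintype.card α) j ≤ #A) :
    ∃ (x : ℕ → ℕ) (t : ℕ → α), (∀ i ≤ j, x i ∈ A) ∧
      ∀ i p, i < p → p ≤ j → x i < x p ∧ c (x i) (x p) = t i := by
  classical
  induction j generalizing A with
  | zero =>
    obtain ⟨x₀, hx₀⟩ := Finset.card_pos.mp (by simpa [prehomogeneousBound] using hA)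
    exact ⟨fun _ => x₀, fun _ => Classical.arbitrary α, fun _ _ => hx₀,
      fun i p hip hp => by omega⟩
  | succ j ih =>
    simp only [prehomogeneousBound] at hA
    have hA₀ : A.Nonempty := Finset.card_pos.mp (by omega)
    set x₀ := A.min' hA₀
    -- pigeonhole: `c x₀` takes one colour `t₀` on many of the elements above `x₀`
    obtain ⟨t₀, -, hfib⟩ := Finset.exists_le_card_fiber_of_mul_le_card_of_maps_to
      (f := c x₀) (s := A.erase x₀) (t := Finset.univ)
      (n := prehomogeneousBound (Fintype.card α) j) (fun _ _ => Finset.mem_univ _)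
      Finset.univ_nonempty
      (by rw [Finset.card_univ, Finset.card_erase_of_mem (A.min'_mem hA₀)]; omega)
    obtain ⟨x, t, hxA, hx⟩ := ih _ hfib
    have hxB (i : ℕ) (hi : i ≤ j) : x i ∈ A.erase x₀ ∧ c x₀ (x i) = t₀ :=
      Finset.mem_filter.mp (hxA i hi)
    refine ⟨fun n => Nat.casesOn n x₀ x, fun n => Nat.casesOn n t₀ t, ?_, ?_⟩
    · rintro (_ | i) hi
      · exact A.min'_mem hA₀
      · exact Finset.mem_of_mem_erase (hxB i (by omega)).1
    · rintro (_ | i) (_ | p) hip hp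
      · omega
      · exact ⟨A.min'_lt_of_mem_erase_min' hA₀ (hxB p (by omega)).1, (hxB p (by omega)).2⟩
      · omega
      · exact hx i p (by omega) (by omega)

section OrderProperty

variable {S X Z : Type*} (ε : Set (S × S))

theorem not_epsOP_two_of_forall_not {φ ψ : X → Z → Set S → Prop}
    (hψ : ∀ a b C, ¬ ψ a b C) : ¬ epsOP ε φ ψ 2 := by
  rintro ⟨a, b, Cs, Ct, H⟩
  exact hψ _ _ _ (H 0 1 zero_lt_one one_lt_two).2.1

theorem epsOP_succ_of_epsOP_forall_exists {ι : Type*} [Fintype ι] [Nonempty ι]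
    (φ ψ : X → Z → Set S → Prop) (j : ℕ)
    (h : epsOP ε (fun (abar : ι → X) b C => ∀ t, φ (abar t) b C)
      (fun (abar : ι → X) b Ct => ∃ t, ψ (abar t) b Ct)
      (prehomogeneousBound (Fintype.card ι) j)) :
    epsOP ε φ ψ (j + 1) := by
  obtain ⟨a, b, Cs, Ct, H⟩ := h
  set K := prehomogeneousBound (Fintype.card ι) j
  have hcolour : ∀ i n, ∃ t, i < n → n < K → ψ (a i t) (b n) (Ct n) := by
    intro i n
    by_cases hin : i < n ∧ n < K
    · obtain ⟨t, ht⟩ := (H i n hin.1 hin.2).2.1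
      exact ⟨t, fun _ _ => ht⟩
    · exact ⟨Classical.arbitrary ι, fun h₁ h₂ => absurd ⟨h₁, h₂⟩ hin⟩
  choose c hc using hcolour
  obtain ⟨x, t, hxK, hx⟩ := exists_prehomogeneous_chain c j (Finset.range K) (by simp [K])
  refine ⟨fun n => a (x n) (t n), fun n => b (x n), fun n => Cs (x n), fun n => Ct (x n),
    fun i n hin hn => ?_⟩
  obtain ⟨hlt, hct⟩ := hx i n hin (by omega)
  have hnK : x n < K := Finset.mem_range.mp (hxK n (by omega))
  obtain ⟨hφ, -, hfat⟩ := H (x i) (x n) hlt hnK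
  refine ⟨hφ (t n), ?_, hfat⟩
  simpa only [hct] using hc (x i) (x n) hlt hnK

end OrderProperty

theorem stmt13_general {S X Z : Type*}
    (ε : Set (S × S))
    (φ ψ : X → Z → Set S → Prop)
    (m : ℕ) (hmax : ¬ epsOP ε φ ψ (m + 1)) :
    ∃ k : ℕ, ¬ epsOP ε
      (fun (abar : Fin m → X) (b : Z) (C : Set S) => ∀ t : Fin m, φ (abar t) b C)
      (fun (abar : Fin m → X) (b : Z) (Ct : Set S) => ∃ t : Fin m, ψ (abar t) b Ct) k := by
  rcases Nat.eq_zero_or_pos m with rfl | hm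
  · exact ⟨2, not_epsOP_two_of_forall_not ε fun _ _ _ ⟨t, _⟩ => t.elim0⟩
  · have : Nonempty (Fin m) := ⟨⟨0, hm⟩⟩
    exact ⟨prehomogeneousBound (Fintype.card (Fin m)) m,
      fun h => hmax (epsOP_succ_of_epsOP_forall_exists ε φ ψ m h)⟩

theorem stmt13 {S X Z : Type*} [TopologicalSpace S] [CompactSpace S] [T2Space S]
    (ε : Set (S × S)) (hεc : IsCompact ε)
    (hsym : ∀ α β : S, (α, β) ∈ ε ↔ (β, α) ∈ ε)
    (hdiag : ∃ O : Set (S × S), IsOpen O ∧ {p : S × S | p.1 = p.2} ⊆ O ∧ O ⊆ ε)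
    (φ ψ : X → Z → Set S → Prop)
    (hdual : ∀ a b C Ct, φ a b C → ψ a b Ct → (C ∩ Ct).Nonempty)
    (hmφ : ∀ a b (C C' : Set S), C ⊆ C' → φ a b C → φ a b C')
    (hmψ : ∀ a b (C C' : Set S), C ⊆ C' → ψ a b C → ψ a b C')
    (m : ℕ) (hm : epsOP ε φ ψ m) (hmax : ¬ epsOP ε φ ψ (m + 1)) :
    ∃ k : ℕ, ¬ epsOP ε
      (fun (abar : Fin m → X) (b : Z) (C : Set S) => ∀ t : Fin m, φ (abar t) b C)
      (fun (abar : Fin m → X) (b : Z) (Ct : Set S) => ∃ t : Fin m, ψ (abar t) b Ct) k :=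
  stmt13_general ε φ ψ m hmax
end

section
/- Let S be a compact Hausdorff space. Suppose 𝒟 ⊆ K(S) satisfies condition (1): C ∈ 𝒟 whenever C' ∈ 𝒟 for every compact neighborhood C' of C, and 𝒟 is upward closed. Then 𝒟 satisfies condition (2): for every C ∉ 𝒟 there exists a compact C̃ with C̃ ∩ C = ∅ and C̃ ∈ ∼𝒟, where ∼𝒟 = {C̃ : C̃ ∩ D ≠ ∅ for all D ∈ 𝒟}. Conversely, (2) together with the trivial inclusions implies (1). -/
open Set

section CompactFamilies

variable {S : Type*} [TopologicalSpace S] [CompactSpace S] (D : Set (Set S))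

/-- For open `O ⊇ C`, the compact set `Oᶜ` is disjoint from `C`; if it is not a blocker of `D`,
some `E ∈ D` misses it, so `E ⊆ O` and upward closure puts every compact `C' ⊇ O` in `D`. -/
theorem exists_compact_disjoint_forall_inter_nonempty_of_mem_of_nhds
    (hup : ∀ C ∈ D, ∀ C' : Set S, IsCompact C' → C ⊆ C' → C' ∈ D)
    (hnhds : ∀ C : Set S, IsCompact C →
        (∀ C' : Set S, IsCompact C' → (∃ O, IsOpen O ∧ C ⊆ O ∧ O ⊆ C') → C' ∈ D) → C ∈ D)
    (C : Set S) (hC : IsCompact C) (hCD : C ∉ D) :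
    ∃ Ct : Set S, IsCompact Ct ∧ Ct ∩ C = ∅ ∧ ∀ E ∈ D, (Ct ∩ E).Nonempty := by
  by_contra! hblock
  refine hCD (hnhds C hC fun C' hC' ⟨O, hO, hCO, hOC'⟩ ↦ ?_)
  have hOc_disj : Oᶜ ∩ C = ∅ :=
    disjoint_iff_inter_eq_empty.1 (disjoint_compl_left_iff_subset.2 hCO)
  obtain ⟨E, hE, hOc_E⟩ := hblock Oᶜ hO.isClosed_compl.isCompact hOc_disj
  have hEO : E ⊆ O :=
    disjoint_compl_left_iff_subset.1 (disjoint_iff_inter_eq_empty.2 hOc_E)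
  exact hup E hE C' hC' (hEO.trans hOC')

/-- If `C ∉ D`, separate `C` from its blocker `Ct` by disjoint open sets `U ⊇ C`, `V ⊇ Ct`:
then `Vᶜ` is a compact neighbourhood of `C` that misses `Ct`, hence is not in `D`. -/
theorem mem_of_forall_nhds_mem_of_exists_compact_disjoint [T2Space S]
    (hblock : ∀ C : Set S, IsCompact C → C ∉ D →
        ∃ Ct : Set S, IsCompact Ct ∧ Ct ∩ C = ∅ ∧ ∀ E ∈ D, (Ct ∩ E).Nonempty)
    (C : Set S) (hC : IsCompact C)
    (hnhds : ∀ C' : Set S, IsCompact C' → (∃ O, IsOpen O ∧ C ⊆ O ∧ O ⊆ C') → C' ∈ D) :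
    C ∈ D := by
  by_contra hCD
  obtain ⟨Ct, hCt, hCt_C, hmeet⟩ := hblock C hC hCD
  obtain ⟨V, U, hV, hU, hCtV, hCU, hVU⟩ :=
    SeparatedNhds.of_isCompact_isCompact hCt hC (disjoint_iff_inter_eq_empty.2 hCt_C)
  have hVc : Vᶜ ∈ D := hnhds Vᶜ hV.isClosed_compl.isCompact ⟨U, hU, hCU, hVU.subset_compl_left⟩
  exact (hmeet Vᶜ hVc).ne_empty
    (disjoint_iff_inter_eq_empty.1 (disjoint_compl_right_iff_subset.2 hCtV))

end CompactFamilies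

theorem stmt18_general {S : Type*} [TopologicalSpace S] [CompactSpace S] [T2Space S]
    (D : Set (Set S))
    (hup : ∀ C ∈ D, ∀ C' : Set S, IsCompact C' → C ⊆ C' → C' ∈ D) :
    (∀ C : Set S, IsCompact C →
        (∀ C' : Set S, IsCompact C' → (∃ O, IsOpen O ∧ C ⊆ O ∧ O ⊆ C') → C' ∈ D) → C ∈ D)
      ↔
    (∀ C : Set S, IsCompact C → C ∉ D →
        ∃ Ct : Set S, IsCompact Ct ∧ Ct ∩ C = ∅ ∧ ∀ E ∈ D, (Ct ∩ E).Nonempty) :=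
  ⟨exists_compact_disjoint_forall_inter_nonempty_of_mem_of_nhds D hup,
    mem_of_forall_nhds_mem_of_exists_compact_disjoint D⟩

theorem stmt18 {S : Type*} [TopologicalSpace S] [CompactSpace S] [T2Space S]
    (D : Set (Set S)) (hD : ∀ C ∈ D, IsCompact C)
    (hup : ∀ C ∈ D, ∀ C' : Set S, IsCompact C' → C ⊆ C' → C' ∈ D) :
    (∀ C : Set S, IsCompact C →
        (∀ C' : Set S, IsCompact C' → (∃ O, IsOpen O ∧ C ⊆ O ∧ O ⊆ C') → C' ∈ D) → C ∈ D)
      ↔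
    (∀ C : Set S, IsCompact C → C ∉ D →
        ∃ Ct : Set S, IsCompact Ct ∧ Ct ∩ C = ∅ ∧ ∀ E ∈ D, (Ct ∩ E).Nonempty) :=
  stmt18_general D hup
end
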